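/- arXiv:2005.03991 — 3 statements merged into one kernel-verified Lean document; each statement's English description precedes it below -/
import Mathlib

section
/- Let J ∈ ℝ^{n×N} (N ≥ n) have singular value decomposition J = Σ_{i=1}^n σ_i w_i v_iᵀ, let r_0 ∈ ℝ^n, θ_0 ∈ ℝ^N, and define linearized gradient-descent iterates θ̃_0 = θ_0, θ̃_{t+1} = θ̃_t − η Jᵀ(r_0 + J(θ̃_t − θ_0)) with stepsize η ≤ 1/σ_1². Then for every iteration t ≥ 0, ‖θ̃_t − θ_0‖² = Σ_{i=1}^n ( ⟨w_i, r_0⟩ (1 − (1 − η σ_i²)^t)/σ_i )², where terms with σ_i = 0 are interpreted as zero. In particular ‖θ̃_t − θ_0‖ ≤ ‖J† r_0‖, where J† is the Moore–Penrose pseudo-inverse of J. -/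
/-!
In the singular bases the linearized gradient descent decouples. The coordinate `aᵢ` of
`θ̃_t − θ₀` along `vᵢ` obeys `a_{t+1} = (1 − ησᵢ²) a_t − ησᵢ cᵢ` with `cᵢ = ⟨wᵢ, r₀⟩`, an affine
iteration started at `0` with fixed point `−cᵢ/σᵢ`, so `a_t = −(cᵢ/σᵢ)(1 − (1 − ησᵢ²)^t)`.
The step size puts `1 − ησᵢ²` in `[0, 1]`, hence `|a_t| ≤ |cᵢ/σᵢ|`, the size of the `vᵢ`-coordinate
of `J† r₀`; Parseval in the orthonormal family `v` turns both claims into these coordinate facts.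
-/

noncomputable section

def eNorm {n : ℕ} (x : Fin n → ℝ) : ℝ := Real.sqrt (∑ i, x i ^ 2)

def dot {n : ℕ} (x y : Fin n → ℝ) : ℝ := ∑ i, x i * y i

def OrthonormalFam {n : ℕ} {ι : Type*} [DecidableEq ι] (w : ι → Fin n → ℝ) : Prop :=
  ∀ i j, dot (w i) (w j) = if i = j then 1 else 0

open Matrix Finset

lemma dot_eq_dotProduct {n : ℕ} (x y : Fin n → ℝ) : dot x y = x ⬝ᵥ y := rfl

lemma eNorm_nonneg {n : ℕ} (x : Fin n → ℝ) : 0 ≤ eNorm x := Real.sqrt_nonneg _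

lemma eNorm_sq {n : ℕ} (x : Fin n → ℝ) : eNorm x ^ 2 = dot x x := by
  rw [eNorm, Real.sq_sqrt (by positivity)]
  simp only [dot, sq]

namespace OrthonormalFam

variable {n : ℕ} {ι : Type*} [Fintype ι] [DecidableEq ι] {v : ι → Fin n → ℝ}

lemma dot_sum_smul (hv : OrthonormalFam v) (a : ι → ℝ) (k : ι) :
    dot (v k) (∑ i, a i • v i) = a k := by
  rw [dot_eq_dotProduct, dotProduct_sum]
  simp only [dotProduct_smul, ← dot_eq_dotProduct, hv k, smul_eq_mul, mul_ite, mul_one, mul_zero,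
    sum_ite_eq, mem_univ, if_true]

lemma eNorm_sum_smul_sq (hv : OrthonormalFam v) (a : ι → ℝ) :
    eNorm (∑ i, a i • v i) ^ 2 = ∑ i, a i ^ 2 := by
  rw [eNorm_sq, dot_eq_dotProduct, sum_dotProduct]
  simp only [smul_dotProduct, ← dot_eq_dotProduct, hv.dot_sum_smul, smul_eq_mul, sq]

end OrthonormalFam

section RankOneSum

variable {ι : Type*} [Fintype ι] {m k : ℕ} (s : ι → ℝ) (x : ι → Fin m → ℝ) (y : ι → Fin k → ℝ)

lemma sum_smul_vecMulVec_mulVec (z : Fin k → ℝ) :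
    (∑ i, s i • vecMulVec (x i) (y i)) *ᵥ z = ∑ i, (s i * dot (y i) z) • x i := by
  simp only [sum_mulVec, smul_mulVec, vecMulVec_mulVec, op_smul_eq_smul, smul_smul,
    dot_eq_dotProduct]

lemma transpose_sum_smul_vecMulVec :
    (∑ i, s i • vecMulVec (x i) (y i))ᵀ = ∑ i, s i • vecMulVec (y i) (x i) := by
  simp only [transpose_sum, transpose_smul, transpose_vecMulVec]

end RankOneSum

/-- The `vᵢ`-coordinate of `θ̃_t − θ₀`, for `σ = σᵢ` and `c = ⟨wᵢ, r₀⟩`; at `σ = 0` it is `0`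
through `x / 0 = 0`, as it should be: the iterates do not move along `ker J`. -/
def gdCoeff (η σ c : ℝ) (t : ℕ) : ℝ := -(c * (1 - (1 - η * σ ^ 2) ^ t) / σ)

lemma gdCoeff_zero (η σ c : ℝ) : gdCoeff η σ c 0 = 0 := by simp [gdCoeff]

lemma gdCoeff_succ (η σ c : ℝ) (t : ℕ) :
    gdCoeff η σ c (t + 1) = gdCoeff η σ c t - η * (σ * (c + σ * gdCoeff η σ c t)) := by
  rcases eq_or_ne σ 0 with rfl | hσ
  · simp [gdCoeff]
  · simp only [gdCoeff]
    field_simp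
    ring

lemma gdCoeff_sq_le {η σ : ℝ} (c : ℝ) (t : ℕ) (h0 : 0 ≤ η * σ ^ 2) (h1 : η * σ ^ 2 ≤ 1) :
    gdCoeff η σ c t ^ 2 ≤ (σ⁻¹ * c) ^ 2 := by
  have hpow_nonneg : 0 ≤ (1 - η * σ ^ 2) ^ t := pow_nonneg (by linarith) t
  have hpow_le_one : (1 - η * σ ^ 2) ^ t ≤ 1 := pow_le_one₀ (by linarith) (by linarith)
  have hfactor : (1 - (1 - η * σ ^ 2) ^ t) ^ 2 ≤ 1 :=
    pow_le_one₀ (sub_nonneg.2 hpow_le_one) (by linarith)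
  calc gdCoeff η σ c t ^ 2 = (σ⁻¹ * c) ^ 2 * (1 - (1 - η * σ ^ 2) ^ t) ^ 2 := by
        rw [gdCoeff]; ring
    _ ≤ (σ⁻¹ * c) ^ 2 := mul_le_of_le_one_right (sq_nonneg _) hfactor

lemma mul_sq_le_one_of_le {η s s₀ : ℝ} (hη : η ≤ 1 / s₀ ^ 2) (hs : 0 ≤ s) (hss₀ : s ≤ s₀) :
    η * s ^ 2 ≤ 1 :=
  calc η * s ^ 2 ≤ 1 / s₀ ^ 2 * s ^ 2 := mul_le_mul_of_nonneg_right hη (sq_nonneg s)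
    _ ≤ 1 / s₀ ^ 2 * s₀ ^ 2 := by gcongr
    _ ≤ 1 := by rw [one_div_mul_eq_div]; exact div_self_le_one _

theorem sub_eq_sum_gdCoeff_smul {ι : Type*} [Fintype ι] [DecidableEq ι] {m N : ℕ}
    {J : Matrix (Fin m) (Fin N) ℝ} {w : ι → Fin m → ℝ} {v : ι → Fin N → ℝ} {σ : ι → ℝ}
    (hw : OrthonormalFam w) (hv : OrthonormalFam v)
    (hJ : J = ∑ i, σ i • vecMulVec (w i) (v i))
    {r0 : Fin m → ℝ} {θ0 : Fin N → ℝ} {η : ℝ} {θ : ℕ → Fin N → ℝ} (hθ0 : θ 0 = θ0)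
    (hθ : ∀ t, θ (t + 1) = θ t - η • Jᵀ *ᵥ (r0 + J *ᵥ (θ t - θ0))) (t : ℕ) :
    θ t - θ0 = ∑ i, gdCoeff η (σ i) (dot (w i) r0) t • v i := by
  induction t with
  | zero => simp [hθ0, gdCoeff_zero]
  | succ t ih =>
    have hres : ∀ k, dot (w k) (r0 + J *ᵥ (θ t - θ0))
        = dot (w k) r0 + σ k * gdCoeff η (σ k) (dot (w k) r0) t := by
      intro k
      rw [ih, hJ, sum_smul_vecMulVec_mulVec, dot_eq_dotProduct, dotProduct_add,
        ← dot_eq_dotProduct, ← dot_eq_dotProduct]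
      simp only [hv.dot_sum_smul, hw.dot_sum_smul]
    rw [hθ, sub_right_comm, hJ, transpose_sum_smul_vecMulVec, sum_smul_vecMulVec_mulVec, ← hJ]
    simp only [hres]
    rw [ih]
    simp only [gdCoeff_succ, sub_smul, sum_sub_distrib, smul_sum, smul_smul]

theorem linearized_iterate_distance_general {n N : ℕ} (hn : 0 < n)
    (J : Matrix (Fin n) (Fin N) ℝ)
    (w : Fin n → Fin n → ℝ) (v : Fin n → Fin N → ℝ) (σ : Fin n → ℝ)
    (hw : OrthonormalFam w) (hv : OrthonormalFam v)
    (hσord : ∀ i j : Fin n, i ≤ j → σ j ≤ σ i) (hσnonneg : ∀ i, 0 ≤ σ i)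
    (hJ : J = ∑ i, σ i • Matrix.vecMulVec (w i) (v i))
    (r0 : Fin n → ℝ) (θ0 : Fin N → ℝ) (η : ℝ)
    (hη0 : 0 ≤ η) (hη : η ≤ 1 / σ ⟨0, hn⟩ ^ 2)
    (θ : ℕ → Fin N → ℝ) (hθ0 : θ 0 = θ0)
    (hθ : ∀ t, θ (t + 1) = θ t - η • J.transpose.mulVec (r0 + J.mulVec (θ t - θ0))) :
    ∀ t : ℕ,
      eNorm (θ t - θ0) ^ 2 =
        ∑ i, (dot (w i) r0 * (1 - (1 - η * σ i ^ 2) ^ t) / σ i) ^ 2 ∧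
      eNorm (θ t - θ0) ≤
        eNorm ((∑ i, (σ i)⁻¹ • Matrix.vecMulVec (v i) (w i)).mulVec r0) := by
  intro t
  have hstep (i : Fin n) : η * σ i ^ 2 ≤ 1 :=
    mul_sq_le_one_of_le hη (hσnonneg i) (hσord _ _ (Nat.zero_le _))
  rw [sub_eq_sum_gdCoeff_smul hw hv hJ hθ0 hθ t, hv.eNorm_sum_smul_sq, sum_smul_vecMulVec_mulVec]
  refine ⟨by simp only [gdCoeff, neg_sq], ?_⟩
  refine (pow_le_pow_iff_left₀ (eNorm_nonneg _) (eNorm_nonneg _) two_ne_zero).1 ?_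
  rw [hv.eNorm_sum_smul_sq, hv.eNorm_sum_smul_sq]
  exact sum_le_sum fun i _ =>
    gdCoeff_sq_le _ t (mul_nonneg hη0 (sq_nonneg _)) (hstep i)

/-- For `J = Σᵢ σᵢ wᵢ vᵢᵀ` and linearized gradient-descent iterates
`θ̃₀ = θ₀`, `θ̃_{t+1} = θ̃_t − η Jᵀ(r₀ + J(θ̃_t − θ₀))` with stepsize `0 ≤ η ≤ 1/σ₁²`,
one has `‖θ̃_t − θ₀‖² = Σᵢ (⟨wᵢ, r₀⟩ (1 − (1 − η σᵢ²)^t)/σᵢ)²` (terms with `σᵢ = 0`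
are zero, which is Lean's convention `x / 0 = 0`), and `‖θ̃_t − θ₀‖ ≤ ‖J† r₀‖` where
`J† = Σᵢ σᵢ⁻¹ vᵢ wᵢᵀ` is the Moore–Penrose pseudo-inverse (with `0⁻¹ = 0`). -/
theorem linearized_iterate_distance {n N : ℕ} (hnN : n ≤ N) (hn : 0 < n)
    (J : Matrix (Fin n) (Fin N) ℝ)
    (w : Fin n → Fin n → ℝ) (v : Fin n → Fin N → ℝ) (σ : Fin n → ℝ)
    (hw : OrthonormalFam w) (hv : OrthonormalFam v)
    (hσord : ∀ i j : Fin n, i ≤ j → σ j ≤ σ i) (hσnonneg : ∀ i, 0 ≤ σ i)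
    (hJ : J = ∑ i, σ i • Matrix.vecMulVec (w i) (v i))
    (r0 : Fin n → ℝ) (θ0 : Fin N → ℝ) (η : ℝ)
    (hη0 : 0 ≤ η) (hη : η ≤ 1 / σ ⟨0, hn⟩ ^ 2)
    (θ : ℕ → Fin N → ℝ) (hθ0 : θ 0 = θ0)
    (hθ : ∀ t, θ (t + 1) = θ t - η • J.transpose.mulVec (r0 + J.mulVec (θ t - θ0))) :
    ∀ t : ℕ,
      eNorm (θ t - θ0) ^ 2 =
        ∑ i, (dot (w i) r0 * (1 - (1 - η * σ i ^ 2) ^ t) / σ i) ^ 2 ∧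
      eNorm (θ t - θ0) ≤
        eNorm ((∑ i, (σ i)⁻¹ • Matrix.vecMulVec (v i) (w i)).mulVec r0) :=
  linearized_iterate_distance_general hn J w v σ hw hv hσord hσnonneg hJ r0 θ0 η hη0 hη θ hθ0 hθ

end
end

section
/- Let J ∈ ℝ^{n×N} (N ≥ n) have singular value decomposition J = Σ_{i=1}^n σ_i w_i v_iᵀ with σ_1 ≤ β, let r ∈ ℝ^n, and let 0 ≤ η ≤ 1/β². Then for every integer t ≥ 0, ‖Jᵀ (I − η J Jᵀ)^t r‖ ≤ β² ‖J† r‖, where J† is the Moore–Penrose pseudo-inverse of J. -/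
/-!
In the orthonormal families `w` and `v` the matrix `J` acts diagonally:
`J vᵢ = σᵢ wᵢ` and `Jᵀ wᵢ = σᵢ vᵢ`. Expanding `r = Σ cᵢ wᵢ` (the `n` vectors `wᵢ`
span `ℝⁿ`), the vector `Jᵀ (I − η J Jᵀ)ᵗ r` has `v`-coefficients `σᵢ (1 − η σᵢ²)ᵗ cᵢ`
and `J† r` has `σᵢ⁻¹ cᵢ`. As `0 ≤ η σᵢ² ≤ 1` and `σᵢ² ≤ β²`, each coefficient of the
first is at most `β²` times the corresponding one of the second in absolute value (both
vanish when `σᵢ = 0`), and the norms are the `ℓ²` norms of the coefficients.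
-/

noncomputable section

open Matrix

section Orthonormal

variable {ι : Type*} [Fintype ι] [DecidableEq ι] {n : ℕ} {v : ι → Fin n → ℝ}

theorem OrthonormalFam.dotProduct_sum_smul (hv : OrthonormalFam v) (a : ι → ℝ) (i : ι) :
    v i ⬝ᵥ ∑ j, a j • v j = a i := by
  simp [dotProduct_sum, dotProduct_smul, show ∀ j, v i ⬝ᵥ v j = _ from hv i]

theorem OrthonormalFam.eNorm_sum_smul (hv : OrthonormalFam v) (a : ι → ℝ) :
    eNorm (∑ i, a i • v i) = √(∑ i, a i ^ 2) := by
  have hsq : ∀ x : Fin n → ℝ, ∑ k, x k ^ 2 = x ⬝ᵥ x := fun x => by simp [dotProduct, sq]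
  rw [eNorm, hsq, sum_dotProduct]
  simp [hv.dotProduct_sum_smul, sq]

theorem OrthonormalFam.sum_smul_vecMulVec_mulVec {m : ℕ} (hv : OrthonormalFam v)
    (b : ι → ℝ) (u : ι → Fin m → ℝ) (i : ι) :
    (∑ j, b j • vecMulVec (u j) (v j)) *ᵥ v i = b i • u i := by
  simp [sum_mulVec, smul_mulVec, vecMulVec_mulVec, show ∀ j, v j ⬝ᵥ v i = _ from (hv · i)]

theorem OrthonormalFam.sum_dotProduct_smul {w : Fin n → Fin n → ℝ} (hw : OrthonormalFam w)
    (x : Fin n → ℝ) : ∑ i, (w i ⬝ᵥ x) • w i = x := by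
  have hrows : of w * (of w)ᵀ = 1 := by
    ext i j
    simpa [mul_apply, one_apply, dot] using hw i j
  have hcols : (of w)ᵀ * of w = 1 := mul_eq_one_comm.mp hrows
  calc ∑ i, (w i ⬝ᵥ x) • w i = (of w)ᵀ *ᵥ (of w *ᵥ x) := by
        rw [mulVec_transpose, vecMul_eq_sum]; rfl
    _ = x := by rw [mulVec_mulVec, hcols, one_mulVec]

end Orthonormal

theorem mulVec_sum_smul_of_mulVec_eq {ι m n : Type*} [Fintype ι] [Fintype n]
    {M : Matrix m n ℝ} {x : ι → n → ℝ} {u : ι → m → ℝ} {c : ι → ℝ}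
    (h : ∀ i, M *ᵥ x i = c i • u i) (a : ι → ℝ) :
    M *ᵥ ∑ i, a i • x i = ∑ i, (c i * a i) • u i := by
  simp [mulVec_sum, mulVec_smul, h, smul_smul, mul_comm]

theorem pow_mulVec_sum_smul_of_mulVec_eq {ι n : Type*} [Fintype ι] [Fintype n] [DecidableEq n]
    {M : Matrix n n ℝ} {x : ι → n → ℝ} {c : ι → ℝ}
    (h : ∀ i, M *ᵥ x i = c i • x i) (a : ι → ℝ) (t : ℕ) :
    (M ^ t) *ᵥ ∑ i, a i • x i = ∑ i, (c i ^ t * a i) • x i := by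
  induction t with
  | zero => simp
  | succ t ih =>
    rw [pow_succ', ← mulVec_mulVec, ih, mulVec_sum_smul_of_mulVec_eq h]
    simp [pow_succ', mul_assoc]

theorem abs_mul_one_sub_mul_sq_pow_le {s β η : ℝ} (hs : 0 ≤ s) (hsβ : s ≤ β) (hη0 : 0 ≤ η)
    (hη : η ≤ 1 / β ^ 2) (t : ℕ) : |s * (1 - η * s ^ 2) ^ t| ≤ β ^ 2 * s⁻¹ := by
  rcases hs.eq_or_lt with rfl | hs
  · simp
  have hβ : 0 < β := hs.trans_le hsβ
  have hs2 : s ^ 2 ≤ β ^ 2 := pow_le_pow_left₀ hs.le hsβ 2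
  have hηs : η * s ^ 2 ≤ 1 := by
    calc η * s ^ 2 ≤ 1 / β ^ 2 * β ^ 2 := mul_le_mul hη hs2 (by positivity) (by positivity)
      _ = 1 := by field_simp
  have hfactor : |1 - η * s ^ 2| ≤ 1 :=
    abs_le.mpr ⟨by nlinarith [sq_nonneg s], by nlinarith [sq_nonneg s]⟩
  calc |s * (1 - η * s ^ 2) ^ t| = s * |1 - η * s ^ 2| ^ t := by
        rw [abs_mul, abs_pow, abs_of_pos hs]
    _ ≤ s * 1 := by gcongr; exact pow_le_one₀ (abs_nonneg _) hfactor
    _ ≤ β ^ 2 * s⁻¹ := by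
        rw [mul_one, ← div_eq_mul_inv, le_div_iff₀ hs]; nlinarith

theorem sqrt_sum_sq_le_mul_sqrt_sum_sq {ι : Type*} [Fintype ι] {a b : ι → ℝ} {k : ℝ}
    (hk : 0 ≤ k) (h : ∀ i, |a i| ≤ k * |b i|) : √(∑ i, a i ^ 2) ≤ k * √(∑ i, b i ^ 2) := by
  rw [← Real.sqrt_sq hk, ← Real.sqrt_mul (sq_nonneg k), Finset.mul_sum]
  refine Real.sqrt_le_sqrt (Finset.sum_le_sum fun i _ => ?_)
  rw [← mul_pow, ← sq_abs (a i), ← sq_abs (k * b i), abs_mul, abs_of_nonneg hk]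
  exact pow_le_pow_left₀ (abs_nonneg _) (h i) 2

theorem transpose_power_residual_bound_general {n N : ℕ} (hn : 0 < n)
    (J : Matrix (Fin n) (Fin N) ℝ)
    (w : Fin n → Fin n → ℝ) (v : Fin n → Fin N → ℝ) (σ : Fin n → ℝ)
    (hw : OrthonormalFam w) (hv : OrthonormalFam v)
    (hσord : ∀ i j : Fin n, i ≤ j → σ j ≤ σ i) (hσnonneg : ∀ i, 0 ≤ σ i)
    (hJ : J = ∑ i, σ i • Matrix.vecMulVec (w i) (v i))
    (β : ℝ) (hβ : σ ⟨0, hn⟩ ≤ β)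
    (r : Fin n → ℝ) (η : ℝ) (hη0 : 0 ≤ η) (hη : η ≤ 1 / β ^ 2) :
    ∀ t : ℕ,
      eNorm (J.transpose.mulVec
          ((((1 : Matrix (Fin n) (Fin n) ℝ) - η • (J * J.transpose)) ^ t).mulVec r)) ≤
        β ^ 2 * eNorm ((∑ i, (σ i)⁻¹ • Matrix.vecMulVec (v i) (w i)).mulVec r) := by
  intro t
  have hσβ (i : Fin n) : σ i ≤ β := (hσord _ i (Nat.zero_le i.val)).trans hβ
  have hJv (i : Fin n) : J *ᵥ v i = σ i • w i := hJ ▸ hv.sum_smul_vecMulVec_mulVec σ w i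
  have hJTw (i : Fin n) : Jᵀ *ᵥ w i = σ i • v i := by
    rw [hJ, transpose_sum]
    simpa [transpose_smul, transpose_vecMulVec] using hw.sum_smul_vecMulVec_mulVec σ v i
  have hstep (i : Fin n) : (1 - η • (J * Jᵀ)) *ᵥ w i = (1 - η * σ i ^ 2) • w i := by
    rw [sub_mulVec, one_mulVec, smul_mulVec, ← mulVec_mulVec, hJTw, mulVec_smul, hJv]
    module
  rw [← hw.sum_dotProduct_smul r, pow_mulVec_sum_smul_of_mulVec_eq hstep,
    mulVec_sum_smul_of_mulVec_eq hJTw,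
    mulVec_sum_smul_of_mulVec_eq (hw.sum_smul_vecMulVec_mulVec _ v),
    hv.eNorm_sum_smul, hv.eNorm_sum_smul]
  refine sqrt_sum_sq_le_mul_sqrt_sum_sq (sq_nonneg β) fun i => ?_
  rw [← mul_assoc, abs_mul, abs_mul (σ i)⁻¹, abs_of_nonneg (inv_nonneg.2 (hσnonneg i)),
    ← mul_assoc]
  exact mul_le_mul_of_nonneg_right
    (abs_mul_one_sub_mul_sq_pow_le (hσnonneg i) (hσβ i) hη0 hη t) (abs_nonneg _)

/-- Let `J = Σᵢ σᵢ wᵢ vᵢᵀ` (SVD, `N ≥ n`) with `σ₁ ≤ β`, let `r ∈ ℝ^n`, and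
`0 ≤ η ≤ 1/β²`.  Then for every `t ≥ 0`, `‖Jᵀ (I − η J Jᵀ)^t r‖ ≤ β² ‖J† r‖`, where
`J† = Σᵢ σᵢ⁻¹ vᵢ wᵢᵀ` is the Moore–Penrose pseudo-inverse of `J` (with `0⁻¹ = 0`). -/
theorem transpose_power_residual_bound {n N : ℕ} (hnN : n ≤ N) (hn : 0 < n)
    (J : Matrix (Fin n) (Fin N) ℝ)
    (w : Fin n → Fin n → ℝ) (v : Fin n → Fin N → ℝ) (σ : Fin n → ℝ)
    (hw : OrthonormalFam w) (hv : OrthonormalFam v)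
    (hσord : ∀ i j : Fin n, i ≤ j → σ j ≤ σ i) (hσnonneg : ∀ i, 0 ≤ σ i)
    (hJ : J = ∑ i, σ i • Matrix.vecMulVec (w i) (v i))
    (β : ℝ) (hβ : σ ⟨0, hn⟩ ≤ β)
    (r : Fin n → ℝ) (η : ℝ) (hη0 : 0 ≤ η) (hη : η ≤ 1 / β ^ 2) :
    ∀ t : ℕ,
      eNorm (J.transpose.mulVec
          ((((1 : Matrix (Fin n) (Fin n) ℝ) - η • (J * J.transpose)) ^ t).mulVec r)) ≤
        β ^ 2 * eNorm ((∑ i, (σ i)⁻¹ • Matrix.vecMulVec (v i) (w i)).mulVec r) :=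
  transpose_power_residual_bound_general hn J w v σ hw hv hσord hσnonneg hJ β hβ r η hη0 hη

end
end

section
/- Let X ∈ ℝ^{n×N} with N ≥ n, let B be an n×n positive semidefinite matrix, and suppose ‖X Xᵀ − B‖ ≤ ε̃² for some scalar ε̃ ≥ 0, where ‖·‖ is the spectral norm. Then there exists a matrix J ∈ ℝ^{n×N} with B = J Jᵀ such that ‖J − X‖ ≤ 2 ε̃. -/
/-!
Write `A = X Xᵀ`. Since `N ≥ n`, `X` has a polar decomposition `X = √A U` with `U Uᵀ = 1`, and
`J = √B U` satisfies `J Jᵀ = B` and `J - X = (√B - √A) U`, so `‖J - X‖ ≤ ‖√B - √A‖`. For positive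
semidefinite `S`, `T` and a unit eigenvector `v` of `S - T` with eigenvalue `μ`, writing
`S² - T² = S (S - T) + (S - T) T` gives `⟪(S² - T²) v, v⟫ = μ (⟪S v, v⟫ + ⟪T v, v⟫)` while
`μ = ⟪S v, v⟫ - ⟪T v, v⟫`; hence `μ² ≤ ‖S² - T²‖`, and so `‖√B - √A‖² ≤ ‖B - A‖ ≤ ε̃²`.
-/

noncomputable section

/-- Spectral (ℓ² operator) norm of a real matrix. -/
def sNorm {m n : Type*} [Fintype m] [Fintype n] [DecidableEq n]
    (A : Matrix m n ℝ) : ℝ :=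
  ‖LinearMap.toContinuousLinearMap (Matrix.toEuclideanLin A)‖

open Matrix Module
open scoped Matrix.Norms.L2Operator MatrixOrder InnerProductSpace ComplexOrder

theorem sNorm_eq_l2_opNorm {m n : Type*} [Fintype m] [Fintype n] [DecidableEq n]
    (A : Matrix m n ℝ) : sNorm A = ‖A‖ :=
  rfl

theorem exists_orthonormal_eq_norm_smul {𝕜 E ι : Type*} [RCLike 𝕜] [NormedAddCommGroup E]
    [InnerProductSpace 𝕜 E] [FiniteDimensional 𝕜 E] [Fintype ι]
    (hcard : Fintype.card ι ≤ finrank 𝕜 E) {f : ι → E}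
    (hf : Pairwise fun i j => ⟪f i, f j⟫_𝕜 = 0) :
    ∃ w : ι → E, Orthonormal 𝕜 w ∧ ∀ i, f i = (‖f i‖ : 𝕜) • w i := by
  obtain ⟨e⟩ :=
    Function.Embedding.nonempty_of_card_le (β := Fin (finrank 𝕜 E)) (by simpa using hcard)
  set g : Fin (finrank 𝕜 E) → E := Function.extend e f 0
  have hge (i : ι) : g (e i) = f i := e.injective.extend_apply _ _ i
  have hg0 {k} (hk : k ∉ Set.range e) : g k = 0 := Function.extend_apply' _ _ _ (by simpa using hk)
  have hg : Pairwise fun k l => ⟪g k, g l⟫_𝕜 = 0 := by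
    intro k l hkl
    by_cases hk : k ∈ Set.range e
    · by_cases hl : l ∈ Set.range e
      · obtain ⟨i, rfl⟩ := hk
        obtain ⟨j, rfl⟩ := hl
        rw [hge, hge]
        exact hf (fun h => hkl (congrArg e h))
      · simp [hg0 hl]
    · simp [hg0 hk]
  -- Gram–Schmidt fixes an orthogonal family up to normalisation and completes it to a basis.
  set b := InnerProductSpace.gramSchmidtOrthonormalBasis (𝕜 := 𝕜) (by simp) g
  refine ⟨b ∘ e, b.orthonormal.comp e e.injective, fun i => ?_⟩
  by_cases hi : f i = 0
  · simp [hi]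
  · rw [Function.comp_apply, InnerProductSpace.gramSchmidtOrthonormalBasis_apply_of_orthogonal _ hg
      (by rwa [hge]), hge, smul_smul, mul_inv_cancel₀ (by simpa using hi), one_smul]

namespace ContinuousLinearMap

variable {𝕜 E : Type*} [RCLike 𝕜] [NormedAddCommGroup E] [InnerProductSpace 𝕜 E]

theorem IsPositive.sq_le_norm_mul_self_sub_of_eigen {S T : E →L[𝕜] E} (hS : S.IsPositive)
    (hT : T.IsPositive) {v : E} (hv : ‖v‖ = 1) {μ : ℝ} (hμ : (S - T) v = (μ : 𝕜) • v) :
    μ ^ 2 ≤ ‖S * S - T * T‖ := by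
  set a := RCLike.re ⟪S v, v⟫_𝕜
  set b := RCLike.re ⟪T v, v⟫_𝕜
  have ha : 0 ≤ a := hS.re_inner_nonneg_left v
  have hb : 0 ≤ b := hT.re_inner_nonneg_left v
  have hμab : μ = a - b := by
    simpa [inner_smul_left, inner_sub_left, hv, a, b] using
      (congrArg (fun w => RCLike.re ⟪w, v⟫_𝕜) hμ).symm
  have hsym : (S - T : E →ₗ[𝕜] E).IsSymmetric := hS.1.sub hT.1
  have hkey : RCLike.re ⟪(S * S - T * T) v, v⟫_𝕜 = μ * (a + b) := by
    have hfac : S * S - T * T = S * (S - T) + (S - T) * T := by noncomm_ring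
    have hST : ⟪(S - T) (T v), v⟫_𝕜 = ⟪T v, (S - T) v⟫_𝕜 := hsym (T v) v
    rw [hfac, _root_.add_apply]
    change RCLike.re ⟪S ((S - T) v) + (S - T) (T v), v⟫_𝕜 = _
    rw [hμ, inner_add_left, map_smul, inner_smul_left, hST, hμ, inner_smul_right]
    simp [a, b, mul_add]
  have hbound : |μ * (a + b)| ≤ ‖S * S - T * T‖ := by
    simpa only [rayleighQuotient, reApplyInnerSelf_apply, hv, one_pow, div_one, hkey]
      using (S * S - T * T).rayleighQuotient_le_norm v
  calc μ ^ 2 = |μ| * |a - b| := by rw [← hμab, abs_mul_abs_self, sq]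
    _ ≤ |μ| * (a + b) := by
      gcongr; exact abs_sub_le_of_nonneg_of_le ha (by linarith) hb (by linarith)
    _ = |μ * (a + b)| := by rw [abs_mul, abs_of_nonneg (add_nonneg ha hb)]
    _ ≤ _ := hbound

end ContinuousLinearMap

namespace Matrix

section RCLike

variable {𝕜 n : Type*} [RCLike 𝕜] [Fintype n] [DecidableEq n]

theorem IsHermitian.l2_opNorm_eq_norm_eigenvalues {A : Matrix n n 𝕜} (hA : A.IsHermitian) :
    ‖A‖ = ‖hA.eigenvalues‖ := by
  conv_lhs => rw [hA.spectral_theorem, Unitary.conjStarAlgAut_apply, ← Unitary.coe_star]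
  rw [CStarRing.norm_mul_coe_unitary, CStarRing.norm_coe_unitary_mul, l2_opNorm_diagonal]
  simp [Pi.norm_def]

theorem IsHermitian.toEuclideanCLM_eigenvectorBasis {A : Matrix n n 𝕜} (hA : A.IsHermitian)
    (i : n) :
    toEuclideanCLM (n := n) (𝕜 := 𝕜) A (hA.eigenvectorBasis i) =
      (hA.eigenvalues i : 𝕜) • hA.eigenvectorBasis i := by
  apply WithLp.ofLp_injective
  rw [ofLp_toEuclideanCLM, hA.mulVec_eigenvectorBasis, WithLp.ofLp_smul,
    RCLike.real_smul_eq_coe_smul (K := 𝕜)]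

theorem PosSemidef.isPositive_toEuclideanCLM {A : Matrix n n 𝕜} (hA : A.PosSemidef) :
    (toEuclideanCLM (n := n) (𝕜 := 𝕜) A).IsPositive :=
  (LinearMap.isPositive_toContinuousLinearMap_iff _).mpr (isPositive_toEuclideanLin_iff.mpr hA)

theorem PosSemidef.l2_opNorm_sub_sq_le {S T : Matrix n n 𝕜} (hS : S.PosSemidef)
    (hT : T.PosSemidef) : ‖S - T‖ ^ 2 ≤ ‖S * S - T * T‖ := by
  have hC : (S - T).IsHermitian := hS.1.sub hT.1
  have heig (i : n) : hC.eigenvalues i ^ 2 ≤ ‖S * S - T * T‖ := by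
    have h := hS.isPositive_toEuclideanCLM.sq_le_norm_mul_self_sub_of_eigen
      hT.isPositive_toEuclideanCLM (hC.eigenvectorBasis.orthonormal.1 i)
      (by rw [← map_sub, hC.toEuclideanCLM_eigenvectorBasis])
    rwa [← map_mul, ← map_mul, ← map_sub] at h
  rw [← Real.le_sqrt (norm_nonneg _) (norm_nonneg _), hC.l2_opNorm_eq_norm_eigenvalues,
    pi_norm_le_iff_of_nonneg (Real.sqrt_nonneg _)]
  exact fun i => Real.abs_le_sqrt (heig i)

theorem l2_opNorm_le_one_of_mul_conjTranspose_eq_one {m : Type*} [Fintype m] [DecidableEq m]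
    {U : Matrix n m 𝕜} (hU : U * Uᴴ = 1) : ‖U‖ ≤ 1 := by
  have h : ‖U‖ * ‖U‖ = ‖(1 : Matrix n n 𝕜)‖ := by
    rw [← hU, ← l2_opNorm_conjTranspose U, ← l2_opNorm_conjTranspose_mul_self,
      conjTranspose_conjTranspose]
  have h1 : ‖(1 : Matrix n n 𝕜)‖ ≤ 1 := by
    rw [cstar_norm_def, map_one]
    exact ContinuousLinearMap.norm_id_le
  nlinarith [norm_nonneg U]

end RCLike

-- Polar decomposition, with `U = V W`: the columns of `V` are the eigenvectors `b j` of `S`, and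
-- the rows of `W` are orthonormal with `σ j • W j = Xᵀ b j`.
theorem PosSemidef.exists_mul_eq_of_mul_self_eq {m k : Type*} [Fintype m] [Fintype k]
    [DecidableEq m] (hcard : Fintype.card m ≤ Fintype.card k) {S : Matrix m m ℝ}
    (hS : S.PosSemidef) {X : Matrix m k ℝ} (hSX : S * S = X * Xᵀ) :
    ∃ U : Matrix m k ℝ, U * Uᵀ = 1 ∧ S * U = X := by
  set b := hS.1.eigenvectorBasis
  set σ := hS.1.eigenvalues
  set y : m → EuclideanSpace ℝ k := fun j => WithLp.toLp 2 (Xᵀ *ᵥ b j)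
  have hy (i j : m) : ⟪y i, y j⟫_ℝ = σ j ^ 2 * ⟪b i, b j⟫_ℝ := by
    simp only [y, EuclideanSpace.inner_eq_star_dotProduct, star_trivial]
    rw [dotProduct_mulVec, vecMul_transpose, mulVec_mulVec, ← hSX, ← mulVec_mulVec,
      hS.1.mulVec_eigenvectorBasis, mulVec_smul, hS.1.mulVec_eigenvectorBasis, smul_smul,
      smul_dotProduct, smul_eq_mul, sq]
  have hy_orth : Pairwise fun i j => ⟪y i, y j⟫_ℝ = 0 := fun i j hij => by
    dsimp only
    rw [hy, b.orthonormal.2 hij, mul_zero]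
  have hy_norm (j : m) : ‖y j‖ = σ j := by
    rw [← sq_eq_sq₀ (norm_nonneg _) (hS.eigenvalues_nonneg j), ← real_inner_self_eq_norm_sq, hy,
      real_inner_self_eq_norm_sq, b.orthonormal.1 j, one_pow, mul_one]
  obtain ⟨w, hw, hyw⟩ := exists_orthonormal_eq_norm_smul (𝕜 := ℝ)
    (hcard.trans_eq finrank_euclideanSpace.symm) hy_orth
  set W : Matrix m k ℝ := Matrix.of fun j => (w j).ofLp
  set V : Matrix m m ℝ := (hS.1.eigenvectorUnitary : Matrix m m ℝ)
  have hW : W * Wᵀ = 1 := by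
    ext i j
    simpa [W, Matrix.mul_apply, one_apply, EuclideanSpace.inner_eq_star_dotProduct, dotProduct,
      mul_comm, eq_comm] using orthonormal_iff_ite.mp hw j i
  have hVt : Vᵀ = star V := (conjTranspose_eq_transpose_of_trivial V).symm
  refine ⟨V * W, ?_, ?_⟩
  · rw [transpose_mul, Matrix.mul_assoc, ← Matrix.mul_assoc W, hW, Matrix.one_mul, hVt,
      Unitary.mul_star_self_of_mem hS.1.eigenvectorUnitary.2]
  · -- Compare `(S U)ᵀ` and `Xᵀ` on the eigenbasis of `S`: both send `b j` to `σ j • w j`.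
    refine transpose_injective (toEuclideanLin.injective (b.toBasis.ext fun j => ?_))
    have hSt : Sᵀ = S := (isHermitian_iff_isSymm.mp hS.1).eq
    have hXb : Xᵀ *ᵥ b j = σ j • w j := by
      rw [← hy_norm j]
      exact congrArg WithLp.ofLp (hyw j)
    simp only [OrthonormalBasis.coe_toBasis, toLpLin_apply]
    rw [hXb, transpose_mul, transpose_mul, hSt, hVt, ← mulVec_mulVec,
      hS.1.mulVec_eigenvectorBasis, ← mulVec_mulVec, mulVec_smul, mulVec_smul,
      IsHermitian.star_eigenvectorUnitary_mulVec, mulVec_single_one]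
    rfl

end Matrix

/-- If `X ∈ ℝ^{n×N}` (`N ≥ n`), `B` is an `n×n` positive semidefinite matrix and
`‖X Xᵀ − B‖ ≤ ε̃²` in spectral norm, then there exists `J ∈ ℝ^{n×N}` with `B = J Jᵀ` and
`‖J − X‖ ≤ 2 ε̃`. -/
theorem exists_sqrt_factor_close {n N : ℕ} (hnN : n ≤ N)
    (X : Matrix (Fin n) (Fin N) ℝ) (B : Matrix (Fin n) (Fin n) ℝ)
    (hB : B.PosSemidef) (eps : ℝ) (heps : 0 ≤ eps)
    (hclose : sNorm (X * X.transpose - B) ≤ eps ^ 2) :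
    ∃ J : Matrix (Fin n) (Fin N) ℝ, B = J * J.transpose ∧ sNorm (J - X) ≤ 2 * eps := by
  have hA : (X * Xᵀ).PosSemidef := by simpa using posSemidef_self_mul_conjTranspose X
  set SA := CFC.sqrt (X * Xᵀ)
  set SB := CFC.sqrt B
  have hSA : SA.PosSemidef := (CFC.sqrt_nonneg _).posSemidef
  have hSB : SB.PosSemidef := (CFC.sqrt_nonneg _).posSemidef
  obtain ⟨U, hU, hSAU⟩ := hSA.exists_mul_eq_of_mul_self_eq (by simpa using hnN)
    (CFC.sqrt_mul_sqrt_self _ hA.nonneg)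
  have hSB_SA : ‖SB - SA‖ ≤ eps := by
    have h := hSB.l2_opNorm_sub_sq_le hSA
    rw [CFC.sqrt_mul_sqrt_self _ hB.nonneg, CFC.sqrt_mul_sqrt_self _ hA.nonneg, norm_sub_rev B,
      ← sNorm_eq_l2_opNorm] at h
    exact (pow_le_pow_iff_left₀ (norm_nonneg _) heps two_ne_zero).mp (h.trans hclose)
  have hU_norm : ‖U‖ ≤ 1 :=
    l2_opNorm_le_one_of_mul_conjTranspose_eq_one (by rwa [conjTranspose_eq_transpose_of_trivial])
  refine ⟨SB * U, ?_, ?_⟩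
  · rw [transpose_mul, (isHermitian_iff_isSymm.mp hSB.1).eq, Matrix.mul_assoc,
      ← Matrix.mul_assoc U, hU, Matrix.one_mul, CFC.sqrt_mul_sqrt_self _ hB.nonneg]
  · calc sNorm (SB * U - X) = ‖(SB - SA) * U‖ := by rw [Matrix.sub_mul, hSAU, sNorm_eq_l2_opNorm]
      _ ≤ ‖SB - SA‖ * ‖U‖ := l2_opNorm_mul _ _
      _ ≤ eps * 1 := by gcongr
      _ ≤ 2 * eps := by linarith
end
end
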